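/- For every integer k ≥ 1 and real x ≠ 0, the double series ∑_{n=0}^∞ ∑_{m=0}^∞ (-1)^m (k+n)!(k+n+m)! / (m! n! (2k+n)! (2k+2n+2m+1)!) y^{2m+2n} equals the single series ∑_{p=0}^∞ (-1)^p k (k-1+p)!(k+p)! / (p! (2k+p)! (2k+1+2p)!) y^{2p}, for all real y. -/

import Mathlib

/-!
Every term of the double series is dominated by `(y²)ⁿ/n! · (y²)ᵐ/m!`, so the series converges
absolutely and may be regrouped along the antidiagonals `n + m = p`. The coefficient of `y^(2p)` is
then `(k+p)!/(p! (2k+2p+1)!)` times `∑ₙ (-1)^(p-n) C(p,n) g(n)` with `g(n) = (k+n)!/(2k+n)!`, which is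
the `p`-th forward difference of `g` at `0`. Since the forward difference of
`n ↦ (a+n)!/(a+d+1+n)!` is `-(d+1)` times the same function with `d + 1` in place of `d`,
`Δᵖ g (0) = (-1)^p k (k-1+p)!/(2k+p)!`.
-/

open Nat Finset fwdDiff

theorem Summable.tsum_tsum_eq_tsum_sum_antidiagonal {A α : Type*} [AddCommMonoid A]
    [HasAntidiagonal A] [AddCommGroup α] [UniformSpace α] [IsUniformAddGroup α] [CompleteSpace α]
    [T0Space α] {f : A × A → α} (hf : Summable f) :
    ∑' (a) (b), f (a, b) = ∑' n, ∑ q ∈ antidiagonal n, f q := by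
  have hσ := HasAntidiagonal.sigmaAntidiagonalEquivProd.summable_iff.mpr hf
  rw [← hf.tsum_prod, ← HasAntidiagonal.sigmaAntidiagonalEquivProd.tsum_eq]
  exact hσ.tsum_sigma.trans (tsum_congr fun n => Finset.tsum_subtype (antidiagonal n) f)

theorem fwdDiff_factorial_div_factorial (a d : ℕ) :
    Δ_[1] (fun n : ℕ => ((a + n)! / (a + d + 1 + n)! : ℝ)) =
      fun n => -(d + 1 : ℝ) * ((a + n)! / (a + (d + 1) + 1 + n)!) := by
  ext n
  simp only [fwdDiff, show a + (n + 1) = a + n + 1 by ring,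
    show a + d + 1 + (n + 1) = a + d + 1 + n + 1 by ring,
    show a + (d + 1) + 1 + n = a + d + 1 + n + 1 by ring, factorial_succ]
  push_cast
  field_simp
  ring

theorem fwdDiff_iter_factorial_div_factorial (a d p : ℕ) :
    (Δ_[1])^[p] (fun n : ℕ => ((a + n)! / (a + d + 1 + n)! : ℝ)) =
      fun n => (-1) ^ p * ((d + p)! / d ! : ℝ) * ((a + n)! / (a + d + p + 1 + n)!) := by
  induction p generalizing d with
  | zero => simp [div_self (show (d ! : ℝ) ≠ 0 by positivity)]
  | succ p ih =>
    have hsmul : (fun n : ℕ => -(d + 1 : ℝ) * ((a + n)! / (a + (d + 1) + 1 + n)!)) =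
        -(d + 1 : ℝ) • fun n : ℕ => ((a + n)! / (a + (d + 1) + 1 + n)! : ℝ) := rfl
    rw [Function.iterate_succ_apply, fwdDiff_factorial_div_factorial, hsmul,
      fwdDiff_iter_const_smul, ih]
    ext n
    simp only [Pi.smul_apply, smul_eq_mul, show d + 1 + p = d + (p + 1) by ring,
      show a + (d + 1) + p + 1 + n = a + d + (p + 1) + 1 + n by ring, factorial_succ d]
    push_cast
    field_simp
    ring

theorem sum_range_alternating_choose_mul_factorial_div_factorial (a d p : ℕ) :
    ∑ n ∈ range (p + 1), (-1 : ℝ) ^ (p - n) * p.choose n * ((a + n)! / (a + d + 1 + n)!) =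
      (-1) ^ p * ((d + p)! / d ! : ℝ) * (a ! / (a + d + p + 1)!) := by
  have := congr_fun (fwdDiff_iter_factorial_div_factorial a d p) 0
  rw [fwdDiff_iter_eq_sum_shift] at this
  simpa [zsmul_eq_mul] using this

noncomputable def doubleSeriesTerm (k : ℕ) (y : ℝ) (n m : ℕ) : ℝ :=
  (-1 : ℝ) ^ m * (k + n)! * (k + n + m)! /
    (m ! * n ! * (2 * k + n)! * (2 * k + 2 * n + 2 * m + 1)!) * y ^ (2 * m + 2 * n)

noncomputable def singleSeriesTerm (k : ℕ) (y : ℝ) (p : ℕ) : ℝ :=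
  (-1 : ℝ) ^ p * k * (k - 1 + p)! * (k + p)! /
    (p ! * (2 * k + p)! * (2 * k + 1 + 2 * p)!) * y ^ (2 * p)

theorem factorial_div_factorial_le_one {α : Type*} [Field α] [LinearOrder α]
    [IsStrictOrderedRing α] {m n : ℕ} (h : m ≤ n) : (m ! / n ! : α) ≤ 1 :=
  div_le_one_of_le₀ (mod_cast factorial_le h) (by positivity)

theorem norm_doubleSeriesTerm_le (k : ℕ) (y : ℝ) (n m : ℕ) :
    ‖doubleSeriesTerm k y n m‖ ≤ (y ^ 2) ^ n / n ! * ((y ^ 2) ^ m / m !) := by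
  have hfactor : doubleSeriesTerm k y n m = (-1) ^ m *
      (((k + n)! / (2 * k + n)! : ℝ) * ((k + n + m)! / (2 * k + 2 * n + 2 * m + 1)!)) *
      ((y ^ 2) ^ n / n ! * ((y ^ 2) ^ m / m !)) := by
    rw [doubleSeriesTerm, ← pow_mul, ← pow_mul, mul_comm 2 n, mul_comm 2 m, add_comm (m * 2),
      pow_add]
    field_simp
  rw [hfactor, norm_mul, norm_mul, norm_pow, norm_neg, norm_one, one_pow, one_mul,
    Real.norm_of_nonneg (by positivity), Real.norm_of_nonneg (by positivity)]
  exact mul_le_of_le_one_left (by positivity) (mul_le_one₀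
    (factorial_div_factorial_le_one (by omega)) (by positivity)
    (factorial_div_factorial_le_one (by omega)))

theorem summable_doubleSeriesTerm (k : ℕ) (y : ℝ) :
    Summable fun q : ℕ × ℕ => doubleSeriesTerm k y q.1 q.2 :=
  .of_norm_bounded ((Real.summable_pow_div_factorial _).mul_of_nonneg
    (Real.summable_pow_div_factorial _) (fun _ => by positivity) (fun _ => by positivity))
    fun q => norm_doubleSeriesTerm_le k y q.1 q.2

theorem sum_antidiagonal_doubleSeriesTerm {k : ℕ} (hk : 1 ≤ k) (y : ℝ) (p : ℕ) :
    ∑ q ∈ antidiagonal p, doubleSeriesTerm k y q.1 q.2 = singleSeriesTerm k y p := by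
  obtain ⟨d, rfl⟩ : ∃ d, k = d + 1 := ⟨k - 1, by omega⟩
  have hterm : ∀ n ∈ range (p + 1), doubleSeriesTerm (d + 1) y n (p - n) =
      (-1 : ℝ) ^ (p - n) * p.choose n * ((d + 1 + n)! / (d + 1 + d + 1 + n)!) *
        ((d + 1 + p)! / (p ! * (2 * (d + 1) + 1 + 2 * p)!) * y ^ (2 * p)) := by
    intro n hn
    have hnp : n ≤ p := Nat.lt_succ_iff.mp (mem_range.mp hn)
    rw [doubleSeriesTerm, cast_choose ℝ hnp, show d + 1 + n + (p - n) = d + 1 + p by omega,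
      show 2 * (d + 1) + 2 * n + 2 * (p - n) + 1 = 2 * (d + 1) + 1 + 2 * p by omega,
      show 2 * (p - n) + 2 * n = 2 * p by omega, show d + 1 + d + 1 + n = 2 * (d + 1) + n by omega]
    field_simp
  rw [Nat.sum_antidiagonal_eq_sum_range_succ_mk, sum_congr rfl hterm, ← sum_mul,
    sum_range_alternating_choose_mul_factorial_div_factorial, singleSeriesTerm,
    add_tsub_cancel_right, show d + 1 + d + p + 1 = 2 * (d + 1) + p by omega, factorial_succ d]
  push_cast
  field_simp

/-- For every integer `k ≥ 1`, the double series
`∑_{n,m≥0} (-1)^m (k+n)!(k+n+m)! / (m! n! (2k+n)! (2k+2n+2m+1)!) y^{2m+2n}`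
equals the single series
`∑_{p≥0} (-1)^p k (k-1+p)!(k+p)! / (p! (2k+p)! (2k+1+2p)!) y^{2p}` for all real `y`. -/
theorem double_series_eq_single_series (k : ℕ) (hk : 1 ≤ k) (y : ℝ) :
    (∑' n : ℕ, ∑' m : ℕ,
      (-1 : ℝ) ^ m * (k + n)! * (k + n + m)! /
        (m ! * n ! * (2 * k + n)! * (2 * k + 2 * n + 2 * m + 1)!) * y ^ (2 * m + 2 * n))
    = ∑' p : ℕ,
      (-1 : ℝ) ^ p * k * (k - 1 + p)! * (k + p)! /
        (p ! * (2 * k + p)! * (2 * k + 1 + 2 * p)!) * y ^ (2 * p) :=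
  (summable_doubleSeriesTerm k y).tsum_tsum_eq_tsum_sum_antidiagonal.trans
    (tsum_congr (sum_antidiagonal_doubleSeriesTerm hk y))
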